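/- arXiv:2502.05937 — 3 statements merged into one kernel-verified Lean document; each statement's English description precedes it below -/
import Mathlib

section
/- For a fixed generator distribution p_G and data distribution p_data (both with densities positive on their common support), the function D*(x) = p_data(x) / (p_data(x) + p_G(x)) maximizes, over all measurable D: X → (0,1), the functional V(D) = E_{x∼p_data}[log D(x)] + E_{x∼p_G}[log(1 − D(x))]. -/
open MeasureTheory Real

lemma pointwise_gan (a b t : ℝ) (ha : 0 ≤ a) (hb : 0 ≤ b) (hs : 0 < a + b)
    (ht : 0 < t) (ht1 : t < 1) :
    a * Real.log t + b * Real.log (1 - t)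
      ≤ a * Real.log (a / (a + b)) + b * Real.log (1 - a / (a + b)) := by
  have hsne : a + b ≠ 0 := ne_of_gt hs
  have hrw : 1 - a / (a + b) = b / (a + b) := by field_simp; ring
  rw [hrw]
  rcases eq_or_lt_of_le ha with ha0 | ha0
  · -- a = 0
    rw [← ha0]
    simp only [zero_mul, zero_add]
    have hb' : 0 < b := by linarith [hs]
    have : Real.log (1 - t) ≤ 0 := Real.log_nonpos (by linarith) (by linarith)
    have : b * Real.log (1 - t) ≤ 0 := mul_nonpos_of_nonneg_of_nonpos hb this
    rw [div_self (ne_of_gt hb'), Real.log_one]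
    linarith
  rcases eq_or_lt_of_le hb with hb0 | hb0
  · -- b = 0
    rw [← hb0]
    simp only [zero_mul, add_zero]
    have ha' : 0 < a := by linarith
    rw [div_self (ne_of_gt ha'), Real.log_one, mul_zero]
    have : Real.log t ≤ 0 := Real.log_nonpos (le_of_lt ht) (le_of_lt ht1)
    nlinarith
  · -- a > 0, b > 0
    have h1 : Real.log t - Real.log (a / (a + b)) ≤ t * (a + b) / a - 1 := by
      have hpos1 : 0 < t / (a / (a + b)) := by positivity
      have := Real.log_le_sub_one_of_pos hpos1
      rw [Real.log_div (ne_of_gt ht) (by positivity)] at this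
      have heq : t / (a / (a + b)) = t * (a + b) / a := by field_simp
      rw [heq] at this
      linarith
    have h2 : Real.log (1 - t) - Real.log (b / (a + b)) ≤ (1 - t) * (a + b) / b - 1 := by
      have hpos2 : 0 < (1 - t) / (b / (a + b)) := by
        apply div_pos (by linarith) (by positivity)
      have := Real.log_le_sub_one_of_pos hpos2
      rw [Real.log_div (by linarith) (by positivity)] at this
      have heq : (1 - t) / (b / (a + b)) = (1 - t) * (a + b) / b := by field_simp
      rw [heq] at this
      linarith
    have e1 : a * (t * (a + b) / a - 1) = t * (a + b) - a := by field_simp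
    have e2 : b * ((1 - t) * (a + b) / b - 1) = (1 - t) * (a + b) - b := by field_simp
    nlinarith [mul_le_mul_of_nonneg_left h1 ha, mul_le_mul_of_nonneg_left h2 hb]

/-- The optimal discriminator `D*(x) = p_data(x) / (p_data(x) + p_G(x))` maximizes the GAN
value functional `V(D) = ∫ p_data · log D + ∫ p_G · log (1 - D)` over measurable
discriminators with values in `(0,1)`. -/
theorem optimal_discriminator_maximizes
    {X : Type*} [MeasurableSpace X] (μ : Measure X)
    (pData pG : X → ℝ)
    (hpData : Measurable pData) (hpG : Measurable pG)
    (hpData0 : ∀ x, 0 ≤ pData x) (hpG0 : ∀ x, 0 ≤ pG x)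
    (hpos : ∀ᵐ x ∂μ, 0 < pData x + pG x)
    (hDstar1 : Integrable (fun x => pData x * Real.log (pData x / (pData x + pG x))) μ)
    (hDstar2 : Integrable (fun x => pG x * Real.log (1 - pData x / (pData x + pG x))) μ)
    (D : X → ℝ) (hD : Measurable D) (hD01 : ∀ x, D x ∈ Set.Ioo (0 : ℝ) 1)
    (hint1 : Integrable (fun x => pData x * Real.log (D x)) μ)
    (hint2 : Integrable (fun x => pG x * Real.log (1 - D x)) μ) :
    (∫ x, pData x * Real.log (D x) ∂μ) + (∫ x, pG x * Real.log (1 - D x) ∂μ)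
      ≤ (∫ x, pData x * Real.log (pData x / (pData x + pG x)) ∂μ)
        + (∫ x, pG x * Real.log (1 - pData x / (pData x + pG x)) ∂μ) := by
  rw [← integral_add hint1 hint2, ← integral_add hDstar1 hDstar2]
  apply integral_mono_ae (hint1.add hint2) (hDstar1.add hDstar2)
  filter_upwards [hpos] with x hx
  exact pointwise_gan (pData x) (pG x) (D x) (hpData0 x) (hpG0 x) hx (hD01 x).1 (hD01 x).2
end

section
/- With the optimal discriminator D*(x) = p_data(x)/(p_data(x)+p_G(x)) substituted, the GAN value equals V(D*, G) = −log 4 + 2·JS(p_data ∥ p_G), where JS denotes the Jensen–Shannon divergence. -/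
open MeasureTheory Real

/-- KL divergence between densities `p` and `q` w.r.t. a base measure `μ`. -/
noncomputable def klDensity {X : Type*} [MeasurableSpace X] (μ : Measure X) (p q : X → ℝ) : ℝ :=
  ∫ x, p x * Real.log (p x / q x) ∂μ

/-- Jensen–Shannon divergence between densities `p` and `q`. -/
noncomputable def jsDensity {X : Type*} [MeasurableSpace X] (μ : Measure X) (p q : X → ℝ) : ℝ :=
  (1 / 2) * klDensity μ p (fun x => (p x + q x) / 2)
    + (1 / 2) * klDensity μ q (fun x => (p x + q x) / 2)
lemma pointwise_log_split (a b : ℝ) (ha : 0 ≤ a) (hb : 0 ≤ b) :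
    a * Real.log (a / ((a + b) / 2)) = a * Real.log (a / (a + b)) + a * Real.log 2 := by
  rcases eq_or_lt_of_le ha with h | h
  · simp [← h]
  · have hab : 0 < a + b := by linarith
    have : a / ((a + b) / 2) = a / (a + b) * 2 := by field_simp
    rw [this, Real.log_mul (by positivity) (by norm_num), mul_add]

/-- With the optimal discriminator `D*(x) = p_data(x)/(p_data(x)+p_G(x))` substituted, the
GAN value equals `-log 4 + 2 · JS(p_data ∥ p_G)`. -/
theorem gan_value_eq_js
    {X : Type*} [MeasurableSpace X] (μ : Measure X)
    (pData pG : X → ℝ)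
    (hpData : Measurable pData) (hpG : Measurable pG)
    (hpData0 : ∀ x, 0 ≤ pData x) (hpG0 : ∀ x, 0 ≤ pG x)
    (hpDataInt : ∫ x, pData x ∂μ = 1) (hpGInt : ∫ x, pG x ∂μ = 1)
    (hint1 : Integrable (fun x => pData x * Real.log (pData x / (pData x + pG x))) μ)
    (hint2 : Integrable (fun x => pG x * Real.log (pG x / (pData x + pG x))) μ) :
    (∫ x, pData x * Real.log (pData x / (pData x + pG x)) ∂μ)
      + (∫ x, pG x * Real.log (1 - pData x / (pData x + pG x)) ∂μ)
      = -Real.log 4 + 2 * jsDensity μ pData pG := by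
  have hP : Integrable pData μ := by
    by_contra h
    rw [integral_undef h] at hpDataInt; norm_num at hpDataInt
  have hG : Integrable pG μ := by
    by_contra h
    rw [integral_undef h] at hpGInt; norm_num at hpGInt
  have h2nd : (∫ x, pG x * Real.log (1 - pData x / (pData x + pG x)) ∂μ)
      = ∫ x, pG x * Real.log (pG x / (pData x + pG x)) ∂μ := by
    apply integral_congr_ae
    filter_upwards with x
    rcases eq_or_lt_of_le (add_nonneg (hpData0 x) (hpG0 x)) with h | h
    · have h1 : pData x = 0 := by nlinarith [hpData0 x, hpG0 x]
      have h2 : pG x = 0 := by nlinarith [hpData0 x, hpG0 x]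
      simp [h1, h2]
    · have : 1 - pData x / (pData x + pG x) = pG x / (pData x + pG x) := by
        field_simp
        ring
      rw [this]
  have hkl1 : klDensity μ pData (fun x => (pData x + pG x) / 2)
      = (∫ x, pData x * Real.log (pData x / (pData x + pG x)) ∂μ) + Real.log 2 := by
    unfold klDensity
    have he : (fun x => pData x * Real.log (pData x / ((pData x + pG x) / 2)))
        = fun x => pData x * Real.log (pData x / (pData x + pG x)) + pData x * Real.log 2 := by
      funext x; exact pointwise_log_split _ _ (hpData0 x) (hpG0 x)
    rw [he, integral_add hint1 (hP.mul_const _), integral_mul_const, hpDataInt, one_mul]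
  have hkl2 : klDensity μ pG (fun x => (pData x + pG x) / 2)
      = (∫ x, pG x * Real.log (pG x / (pData x + pG x)) ∂μ) + Real.log 2 := by
    unfold klDensity
    have he : (fun x => pG x * Real.log (pG x / ((pData x + pG x) / 2)))
        = fun x => pG x * Real.log (pG x / (pData x + pG x)) + pG x * Real.log 2 := by
      funext x
      have := pointwise_log_split (pG x) (pData x) (hpG0 x) (hpData0 x)
      rw [add_comm (pG x)] at this
      exact this
    rw [he, integral_add hint2 (hG.mul_const _), integral_mul_const, hpGInt, one_mul]
  have h4 : Real.log 4 = 2 * Real.log 2 := by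
    rw [show (4:ℝ) = 2^2 by norm_num, Real.log_pow]; push_cast; ring
  rw [h2nd]
  unfold jsDensity
  rw [hkl1, hkl2, h4]
  ring
end

section
/- Gumbel-max trick: if g_1,…,g_K are i.i.d. standard Gumbel random variables (CDF F(g) = exp(−exp(−g))) and u_1,…,u_K are real logits, then P(argmax_i (u_i + g_i) = k) = exp(u_k) / Σ_j exp(u_j). -/
open MeasureTheory Real Set Filter Topology

private lemma gumbel_hasDerivAt (S : ℝ) (hS : 0 < S) (x : ℝ) :
    HasDerivAt (fun x => S⁻¹ * Real.exp (-(S * Real.exp (-x))))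
      (Real.exp (-x) * Real.exp (-(S * Real.exp (-x)))) x := by
  have h1 : HasDerivAt (fun x : ℝ => -(S * Real.exp (-x))) (S * Real.exp (-x)) x := by
    have := ((Real.hasDerivAt_exp (-x)).comp x ((hasDerivAt_id x).neg)).const_mul S
    refine this.neg.congr_deriv ?_
    ring
  have h2 := (h1.exp).const_mul S⁻¹
  refine h2.congr_deriv ?_
  field_simp

private lemma gumbel_tendsto_atBot (S : ℝ) (hS : 0 < S) :
    Tendsto (fun x => S⁻¹ * Real.exp (-(S * Real.exp (-x)))) atBot (𝓝 0) := by
  have h1 : Tendsto (fun x : ℝ => Real.exp (-x)) atBot atTop :=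
    Real.tendsto_exp_atTop.comp tendsto_neg_atBot_atTop
  have h2 : Tendsto (fun x : ℝ => -(S * Real.exp (-x))) atBot atBot :=
    tendsto_neg_atTop_atBot.comp (h1.const_mul_atTop hS)
  have h3 := Real.tendsto_exp_atBot.comp h2
  simpa using h3.const_mul S⁻¹

private lemma gumbel_tendsto_atTop (S : ℝ) :
    Tendsto (fun x => S⁻¹ * Real.exp (-(S * Real.exp (-x)))) atTop (𝓝 S⁻¹) := by
  have h1 : Tendsto (fun x : ℝ => Real.exp (-x)) atTop (𝓝 0) :=
    Real.tendsto_exp_atBot.comp tendsto_neg_atTop_atBot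
  have h2 : Continuous fun y : ℝ => S⁻¹ * Real.exp (-(S * y)) := by continuity
  have h3 := (h2.tendsto 0).comp h1
  simpa [Function.comp_def] using h3

private lemma gumbel_bound (S : ℝ) (hS : 0 < S) (x : ℝ) :
    Real.exp (-x) * Real.exp (-(S * Real.exp (-x))) ≤ 4 / S ^ 2 * Real.exp x := by
  set y := Real.exp (-x) with hy
  have hy0 : 0 < y := Real.exp_pos _
  have hx : Real.exp x = y⁻¹ := by rw [hy, ← Real.exp_neg, neg_neg]
  rw [hx]
  have hE := Real.exp_pos (S * y)
  have key : (S * y / 2) ^ 2 ≤ Real.exp (S * y) := by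
    have h0 : 0 ≤ S * y / 2 := by positivity
    have h1 : S * y / 2 ≤ Real.exp (S * y / 2) := by
      linarith [Real.add_one_le_exp (S * y / 2)]
    calc (S * y / 2) ^ 2 ≤ Real.exp (S * y / 2) ^ 2 := by
          exact pow_le_pow_left₀ h0 h1 2
      _ = Real.exp (S * y) := by rw [← Real.exp_nat_mul]; ring_nf
  have e1 : Real.exp (-(S * y)) = (Real.exp (S * y))⁻¹ := Real.exp_neg _
  rw [e1, mul_inv_le_iff₀ hE]
  have heq : 4 / S ^ 2 * y⁻¹ * Real.exp (S * y) = 4 * Real.exp (S * y) / (y * S ^ 2) := by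
    field_simp
  rw [heq, le_div_iff₀ (by positivity)]
  nlinarith [key]

private lemma gumbel_integrableOn_Iic (S : ℝ) (hS : 0 < S) (a : ℝ) :
    IntegrableOn (fun x => Real.exp (-x) * Real.exp (-(S * Real.exp (-x)))) (Iic a) := by
  have hc : Continuous fun x => Real.exp (-x) * Real.exp (-(S * Real.exp (-x))) := by
    continuity
  refine Integrable.mono ((integrableOn_exp_Iic a).const_mul (4 / S ^ 2))
    hc.aestronglyMeasurable.restrict ?_
  filter_upwards with x
  rw [Real.norm_eq_abs, Real.norm_eq_abs, abs_of_nonneg (by positivity),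
    abs_of_nonneg (by positivity)]
  exact gumbel_bound S hS x

private lemma gumbel_integrableOn_Ioi (S : ℝ) (hS : 0 < S) (a : ℝ) :
    IntegrableOn (fun x => Real.exp (-x) * Real.exp (-(S * Real.exp (-x)))) (Ioi a) :=
  integrableOn_Ioi_deriv_of_nonneg' (fun x _ => gumbel_hasDerivAt S hS x)
    (fun x _ => by positivity) (gumbel_tendsto_atTop S)

private lemma gumbel_integrable (S : ℝ) (hS : 0 < S) :
    Integrable (fun x => Real.exp (-x) * Real.exp (-(S * Real.exp (-x)))) := by
  rw [← integrableOn_univ, ← Set.Iic_union_Ioi (a := (0:ℝ))]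
  exact (gumbel_integrableOn_Iic S hS 0).union (gumbel_integrableOn_Ioi S hS 0)

private lemma gumbel_integral_Iic (S : ℝ) (hS : 0 < S) (t : ℝ) :
    ∫ x in Iic t, Real.exp (-x) * Real.exp (-(S * Real.exp (-x)))
      = S⁻¹ * Real.exp (-(S * Real.exp (-t))) := by
  have := integral_Iic_of_hasDerivAt_of_tendsto' (fun x _ => gumbel_hasDerivAt S hS x)
    (gumbel_integrableOn_Iic S hS t) (gumbel_tendsto_atBot S hS)
  simpa using this

private lemma gumbel_integral (S : ℝ) (hS : 0 < S) :
    ∫ x, Real.exp (-x) * Real.exp (-(S * Real.exp (-x))) = S⁻¹ := by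
  have hIoi := integral_Ioi_of_hasDerivAt_of_tendsto' (fun x _ => gumbel_hasDerivAt S hS x)
    (gumbel_integrableOn_Ioi S hS 0) (gumbel_tendsto_atTop S)
  rw [← setIntegral_univ, ← Set.Iic_union_Ioi (a := (0:ℝ)),
    setIntegral_union (Set.Iic_disjoint_Ioi le_rfl) measurableSet_Ioi
      (gumbel_integrableOn_Iic S hS 0) (gumbel_integrableOn_Ioi S hS 0),
    gumbel_integral_Iic S hS 0, hIoi]
  ring

private lemma gumbel_density (μ : Measure ℝ) [IsProbabilityMeasure μ]
    (hcdf : ∀ t : ℝ, μ (Set.Iic t) = ENNReal.ofReal (Real.exp (-Real.exp (-t)))) :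
    μ = volume.withDensity
      (fun x => ENNReal.ofReal (Real.exp (-x) * Real.exp (-(1 * Real.exp (-x))))) := by
  set ν := volume.withDensity
      (fun x => ENNReal.ofReal (Real.exp (-x) * Real.exp (-(1 * Real.exp (-x))))) with hν
  have hν_Iic : ∀ t : ℝ, ν (Iic t) = ENNReal.ofReal (Real.exp (-Real.exp (-t))) := by
    intro t
    rw [hν, withDensity_apply _ measurableSet_Iic,
      ← ofReal_integral_eq_lintegral_ofReal (gumbel_integrableOn_Iic 1 one_pos t)
        (Filter.Eventually.of_forall fun x => by positivity),
      gumbel_integral_Iic 1 one_pos t]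
    simp
  refine Measure.ext_of_Iic μ ν fun t => ?_
  rw [hcdf t, hν_Iic t]

private lemma gumbel_Iio (μ : Measure ℝ) [IsProbabilityMeasure μ]
    (hcdf : ∀ t : ℝ, μ (Set.Iic t) = ENNReal.ofReal (Real.exp (-Real.exp (-t))))
    (c : ℝ) : μ (Iio c) = ENNReal.ofReal (Real.exp (-Real.exp (-c))) := by
  have h0 : μ {c} = 0 := by
    rw [gumbel_density μ hcdf, withDensity_apply _ (measurableSet_singleton c)]
    rw [Measure.restrict_singleton]
    simp
  have h1 : μ (Iic c) = μ (Iio c) := by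
    rw [← Set.Iio_union_right, measure_union (by simp) (measurableSet_singleton c), h0, add_zero]
  rw [← h1, hcdf]

/-- Gumbel-max trick: if `g₁, …, g_K` are i.i.d. standard Gumbel (CDF `exp (-exp (-t))`)
and `u₁, …, u_K` are real logits, then
`P(argmax_i (u_i + g_i) = k) = exp u_k / ∑ j, exp u_j`. -/
theorem gumbel_max_trick
    {K : ℕ} (hK : 0 < K) (μ : Measure ℝ) [IsProbabilityMeasure μ]
    (hcdf : ∀ t : ℝ, μ (Set.Iic t) = ENNReal.ofReal (Real.exp (-Real.exp (-t))))
    (u : Fin K → ℝ) (k : Fin K) :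
    (Measure.pi fun _ : Fin K => μ)
        {g : Fin K → ℝ | ∀ i : Fin K, i ≠ k → u i + g i < u k + g k}
      = ENNReal.ofReal (Real.exp (u k) / ∑ j : Fin K, Real.exp (u j)) := by
  classical
  set p : Fin K → Prop := fun i => i = k with hp
  set T : ℝ := ∑ i : {i : Fin K // ¬ p i}, Real.exp (u i - u k) with hT
  have hT0 : 0 ≤ T := Finset.sum_nonneg fun i _ => (Real.exp_pos _).le
  set S : ℝ := 1 + T with hS
  have hS0 : 0 < S := by positivity
  have hmp := (measurePreserving_funUnique μ {i : Fin K // p i}).prod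
      (MeasurePreserving.id (Measure.pi fun _ : {i : Fin K // ¬ p i} => μ))
  have hmp0 := measurePreserving_piEquivPiSubtypeProd (fun _ : Fin K => μ) p
  have hfin : (Subtype.fintype p) = (Unique.fintype : Fintype {i : Fin K // p i}) :=
    Subsingleton.elim _ _
  rw [hfin] at hmp0
  have hΦ := hmp.comp hmp0
  set C : Set (ℝ × ({i : Fin K // ¬ p i} → ℝ)) :=
    {q | ∀ i : {i : Fin K // ¬ p i}, u i + q.2 i < u k + q.1} with hC
  have hCmeas : MeasurableSet C := by
    have hCeq : C = ⋂ i : {i : Fin K // ¬ p i},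
        {q : ℝ × ({i : Fin K // ¬ p i} → ℝ) | u i + q.2 i < u k + q.1} := by
      ext q; simp [hC, Set.mem_iInter]
    rw [hCeq]
    exact MeasurableSet.iInter fun i => measurableSet_lt (by fun_prop) (by fun_prop)
  have hpre : (Prod.map (MeasurableEquiv.funUnique {i : Fin K // p i} ℝ) id ∘
      (MeasurableEquiv.piEquivPiSubtypeProd (fun _ : Fin K => ℝ) p)) ⁻¹' C
      = {g : Fin K → ℝ | ∀ i : Fin K, i ≠ k → u i + g i < u k + g k} := by
    ext g
    simp only [Set.mem_preimage, Set.mem_setOf_eq, hC, Function.comp_apply,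
      MeasurableEquiv.piEquivPiSubtypeProd_apply, Prod.map_apply,
      MeasurableEquiv.funUnique_apply]
    constructor
    · intro h i hi; exact h ⟨i, hi⟩
    · intro h i; exact h i i.2
  have key : (Measure.pi fun _ : Fin K => μ)
      {g : Fin K → ℝ | ∀ i : Fin K, i ≠ k → u i + g i < u k + g k}
      = (μ.prod (Measure.pi fun _ : {i : Fin K // ¬ p i} => μ)) C := by
    rw [← hpre]; exact hΦ.measure_preimage hCmeas.nullMeasurableSet
  rw [key, Measure.prod_apply hCmeas]
  have hql : ∀ x : ℝ, (Prod.mk x ⁻¹' C)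
      = Set.pi Set.univ (fun i : {i : Fin K // ¬ p i} => Iio (u k + x - u i)) := by
    intro x
    ext h
    simp only [Set.mem_preimage, hC, Set.mem_setOf_eq, Set.mem_pi, Set.mem_univ,
      forall_true_left, Set.mem_Iio, true_implies]
    constructor <;> intro h' i <;> have := h' i <;> linarith
  have hslice : ∀ x : ℝ, (Measure.pi fun _ : {i : Fin K // ¬ p i} => μ) (Prod.mk x ⁻¹' C)
      = ENNReal.ofReal (Real.exp (-(T * Real.exp (-x)))) := by
    intro x
    rw [hql x, Measure.pi_pi]
    have hfac : ∀ i : {i : Fin K // ¬ p i}, μ (Iio (u k + x - u i))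
        = ENNReal.ofReal (Real.exp (-(Real.exp (u i - u k) * Real.exp (-x)))) := by
      intro i
      rw [gumbel_Iio μ hcdf]
      congr 2
      rw [← Real.exp_add]
      congr 1
      ring
    simp_rw [hfac]
    rw [← ENNReal.ofReal_prod_of_nonneg (fun i _ => (Real.exp_pos _).le), ← Real.exp_sum]
    congr 2
    simp [hT, Finset.sum_mul, Finset.sum_neg_distrib]
  rw [lintegral_congr hslice]
  rw [gumbel_density μ hcdf,
    lintegral_withDensity_eq_lintegral_mul _
      (by fun_prop : Measurable fun x => ENNReal.ofReal (Real.exp (-x) * Real.exp (-(1 * Real.exp (-x)))))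
      (by fun_prop : Measurable fun x => ENNReal.ofReal (Real.exp (-(T * Real.exp (-x)))))]
  have hcomb : ∫⁻ a, ((fun x => ENNReal.ofReal (Real.exp (-x) * Real.exp (-(1 * Real.exp (-x)))))
        * fun x => ENNReal.ofReal (Real.exp (-(T * Real.exp (-x))))) a
      = ∫⁻ a, ENNReal.ofReal (Real.exp (-a) * Real.exp (-(S * Real.exp (-a)))) :=
    lintegral_congr fun a => by
      simp only [Pi.mul_apply]
      rw [← ENNReal.ofReal_mul (by positivity)]
      congr 1
      rw [mul_assoc, ← Real.exp_add]
      congr 2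
      rw [hS]; ring
  rw [hcomb,
    ← ofReal_integral_eq_lintegral_ofReal (gumbel_integrable S hS0)
      (Filter.Eventually.of_forall fun x => by positivity),
    gumbel_integral S hS0]
  congr 1
  have h1 : T = ∑ j ∈ Finset.univ.erase k, Real.exp (u j - u k) := by
    rw [hT]
    exact (Finset.sum_subtype (Finset.univ.erase k)
      (fun x => by simp [hp, Finset.mem_erase])
      (fun j => Real.exp (u j - u k))).symm
  have h2 : S = ∑ j : Fin K, Real.exp (u j - u k) := by
    rw [hS, h1,
      ← Finset.add_sum_erase Finset.univ (fun j => Real.exp (u j - u k)) (Finset.mem_univ k)]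
    simp
  have h3 : S = (∑ j : Fin K, Real.exp (u j)) / Real.exp (u k) := by
    rw [h2]
    simp [Real.exp_sub, ← Finset.sum_div]
  rw [h3, inv_div]
end
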